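/- Let σ ∈ S^{0,0}_{ρ,Λ} and let F : ℂ → ℂ be a C^∞ function (smooth as a function of two real variables). Then F ∘ σ ∈ S^{0,0}_{ρ,Λ}; that is, for all multi-indices α and β there exists a constant C_{α,β} > 0 such that |(∂_x^α ∂_ξ^β (F ∘ σ))(x,ξ)| ≤ C_{α,β} Λ(x)^{−ρ|α|} Λ(ξ)^{−ρ|β|} for all x, ξ ∈ ℝⁿ. -/

import Mathlib

open MeasureTheory Real Filter
open scoped RealInnerProductSpace BigOperators ENNReal

noncomputable section

/-- Euclidean space ℝⁿ. -/
abbrev En (n : ℕ) : Type := EuclideanSpace ℝ (Fin n)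

/-- Partial derivative in the `i`-th coordinate direction. -/
def pd {n : ℕ} {F : Type*} [NormedAddCommGroup F] [NormedSpace ℝ F]
    (i : Fin n) (f : En n → F) : En n → F :=
  fun x => fderiv ℝ f x (EuclideanSpace.single i 1)

/-- Iterated partial derivative `∂^α` for a multi-index `α`. -/
def mpd {n : ℕ} {F : Type*} [NormedAddCommGroup F] [NormedSpace ℝ F]
    (α : Fin n → ℕ) (f : En n → F) : En n → F :=
  (List.finRange n).foldr (fun i g => (pd i)^[α i] g) f

/-- Mixed derivative `∂_x^α ∂_ξ^β σ` of a symbol. -/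
def mixpd {n : ℕ} (α β : Fin n → ℕ) (σ : En n → En n → ℂ) : En n → En n → ℂ :=
  fun x ξ => mpd α (fun y => mpd β (σ y) ξ) x

/-- `Λ` is a weight function of polynomial growth with parameters `μ₀ ≤ μ₁ ≤ μ`. -/
structure IsWeight (n : ℕ) (Λ : En n → ℝ) (μ₀ μ₁ μ : ℝ) : Prop where
  pos : ∀ ξ, 0 < Λ ξ
  smooth : ContDiff ℝ (⊤ : ℕ∞) Λ
  growth : ∃ C₀ C₁ : ℝ, 0 < C₀ ∧ C₀ ≤ C₁ ∧ ∀ ξ : En n,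
    C₀ * (1 + ‖ξ‖) ^ μ₀ ≤ Λ ξ ∧ Λ ξ ≤ C₁ * (1 + ‖ξ‖) ^ μ₁
  hμ₀ : 0 < μ₀
  hμ₀₁ : μ₀ ≤ μ₁
  hμ₁ : μ₁ ≤ μ
  deriv_bound : ∀ (α γ : Fin n → ℕ), (∀ i, γ i ≤ 1) →
    ∃ C > 0, ∀ ξ : En n,
      |(∏ i, ξ i ^ γ i) * mpd (α + γ) Λ ξ| ≤ C * Λ ξ ^ (1 - (∑ i, (α i : ℝ)) / μ)

/-- The symbol class `S^m_{ρ,Λ}`. -/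
def SClass {n : ℕ} (Λ : En n → ℝ) (ρ m : ℝ) (σ : En n → En n → ℂ) : Prop :=
  ContDiff ℝ (⊤ : ℕ∞) (fun q : En n × En n => σ q.1 q.2) ∧
  ∀ α β : Fin n → ℕ, ∃ C > 0, ∀ x ξ : En n,
    ‖mixpd α β σ x ξ‖ ≤ C * Λ ξ ^ (m - ρ * ∑ i, (β i : ℝ))

/-- The symbol class `M^m_{ρ,Λ}`. -/
def MClass {n : ℕ} (Λ : En n → ℝ) (ρ m : ℝ) (σ : En n → En n → ℂ) : Prop :=
  ∀ γ : Fin n → ℕ, (∀ i, γ i ≤ 1) →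
    SClass Λ ρ m (fun x ξ => ((∏ i, ξ i ^ γ i : ℝ) : ℂ) * mixpd 0 γ σ x ξ)

/-- The Fourier transform `φ̂(ξ) = (2π)^{-n/2} ∫ e^{-ix·ξ} φ(x) dx`. -/
def ft {n : ℕ} (φ : En n → ℂ) (ξ : En n) : ℂ :=
  (((2 * Real.pi) ^ (-(n : ℝ) / 2) : ℝ) : ℂ) *
    ∫ (x : En n), Complex.exp (-Complex.I * (⟪x, ξ⟫ : ℂ)) * φ x

/-- The pseudo-differential operator `T_σ`. -/
def pdo {n : ℕ} (σ : En n → En n → ℂ) (φ : En n → ℂ) (x : En n) : ℂ :=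
  (((2 * Real.pi) ^ (-(n : ℝ) / 2) : ℝ) : ℂ) *
    ∫ (ξ : En n), Complex.exp (Complex.I * (⟪x, ξ⟫ : ℂ)) * σ x ξ * ft φ ξ

end

noncomputable section

/-- The SG symbol class `S^{m₁,m₂}_{ρ,Λ}`. -/
def SGClass {n : ℕ} (Λ : En n → ℝ) (ρ m₁ m₂ : ℝ) (σ : En n → En n → ℂ) : Prop :=
  ContDiff ℝ (⊤ : ℕ∞) (fun q : En n × En n => σ q.1 q.2) ∧
  ∀ α β : Fin n → ℕ, ∃ C > 0, ∀ x ξ : En n,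
    ‖mixpd α β σ x ξ‖ ≤
      C * Λ x ^ (m₂ - ρ * ∑ i, (α i : ℝ)) * Λ ξ ^ (m₁ - ρ * ∑ i, (β i : ℝ))

/-- The SG symbol class `M^{m₁,m₂}_{ρ,Λ}`. -/
def SGMClass {n : ℕ} (Λ : En n → ℝ) (ρ m₁ m₂ : ℝ) (σ : En n → En n → ℂ) : Prop :=
  ∀ γ δ : Fin n → ℕ, (∀ i, γ i ≤ 1) → (∀ i, δ i ≤ 1) →
    SGClass Λ ρ m₁ m₂ (fun x ξ =>
      ((∏ i, x i ^ δ i : ℝ) : ℂ) * ((∏ i, ξ i ^ γ i : ℝ) : ℂ) * mixpd δ γ σ x ξ)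

end

/-!
Every derivative of `F ∘ σ` is a sum of products of derivatives of `F` evaluated at `σ`, which
are bounded because `σ` is, with derivatives of `Re σ` and `Im σ`, which carry the decay. Instead
of expanding this Faà di Bruno formula we induct on the order `N` of the estimates: by the chain
rule `∂(F ∘ σ) = (∂₁F ∘ σ) ∂(Re σ) + (∂₂F ∘ σ) ∂(Im σ)`, the factors `∂ₖF ∘ σ` satisfy the
estimates up to order `N` by induction (applied to the smooth functions `∂ₖF`), and estimates up
to order `N` are stable under products (Leibniz rule, by the same induction).
-/

open scoped ContDiff
open Function

section OneVariable

variable {n : ℕ} {F G : Type*} [NormedAddCommGroup F] [NormedSpace ℝ F]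
  [NormedAddCommGroup G] [NormedSpace ℝ G]

theorem fderiv_fderiv_apply_comm {V : Type*} [NormedAddCommGroup V] [NormedSpace ℝ V]
    {f : V → F} (hf : ContDiff ℝ 2 f) (x u v : V) :
    fderiv ℝ (fun y => fderiv ℝ f y u) x v = fderiv ℝ (fun y => fderiv ℝ f y v) x u := by
  have hf' : DifferentiableAt ℝ (fderiv ℝ f) x :=
    (hf.fderiv_right (m := 1) le_rfl).differentiable one_ne_zero x
  rw [fderiv_clm_apply hf' (differentiableAt_const u),
    fderiv_clm_apply hf' (differentiableAt_const v)]
  simpa using hf.contDiffAt.isSymmSndFDerivAt (by simp) v u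

theorem pd_comm {g : En n → F} (hg : ContDiff ℝ 2 g) (i j : Fin n) :
    pd i (pd j g) = pd j (pd i g) :=
  funext fun x => fderiv_fderiv_apply_comm hg x _ _

theorem contDiff_pd {g : En n → F} (hg : ContDiff ℝ ∞ g) (i : Fin n) :
    ContDiff ℝ ∞ (pd i g) :=
  (hg.fderiv_right le_rfl).clm_apply contDiff_const

theorem pd_add {f g : En n → F} (hf : Differentiable ℝ f) (hg : Differentiable ℝ g)
    (i : Fin n) : pd i (f + g) = pd i f + pd i g :=
  funext fun x => by simp [pd, fderiv_add (hf x) (hg x)]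

theorem pd_clm_comp (L : F →L[ℝ] G) {g : En n → F} (hg : Differentiable ℝ g) (i : Fin n) :
    pd i (fun x => L (g x)) = fun x => L (pd i g x) :=
  funext fun x => by
    change fderiv ℝ (L ∘ g) x _ = _
    rw [(L.hasFDerivAt.comp x (hg x).hasFDerivAt).fderiv]
    rfl

theorem pd_mul {𝔸 : Type*} [NormedCommRing 𝔸] [NormedAlgebra ℝ 𝔸] {f g : En n → 𝔸}
    (hf : Differentiable ℝ f) (hg : Differentiable ℝ g) (i : Fin n) :
    pd i (f * g) = pd i f * g + f * pd i g :=
  funext fun x => by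
    simp only [pd, Pi.add_apply, Pi.mul_apply, fderiv_mul (hf x) (hg x),
      add_apply, smul_apply, smul_eq_mul]
    ring

theorem pd_comp {f : F → G} {g : En n → F} {x : En n} (hf : DifferentiableAt ℝ f (g x))
    (hg : DifferentiableAt ℝ g x) (i : Fin n) :
    pd i (fun x => f (g x)) x = fderiv ℝ f (g x) (pd i g x) := by
  change fderiv ℝ (f ∘ g) x _ = _
  rw [fderiv_comp x hf hg]
  rfl

def dirList (α : Fin n → ℕ) : List (Fin n) :=
  (List.finRange n).flatMap fun i => List.replicate (α i) i

theorem count_dirList (α : Fin n → ℕ) (i : Fin n) : (dirList α).count i = α i := by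
  simp [dirList, List.count_flatMap, List.count_replicate, ← Fin.sum_univ_def,
    Finset.sum_ite_eq']

theorem mpd_eq_foldr (α : Fin n → ℕ) (g : En n → F) : mpd α g = (dirList α).foldr pd g := by
  rw [mpd, dirList]
  induction List.finRange n with
  | nil => rfl
  | cons i L ih =>
    rw [List.foldr_cons, List.flatMap_cons, List.foldr_append, ih]
    clear ih
    induction α i with
    | zero => rfl
    | succ k ih => rw [Function.iterate_succ_apply', ih]; rfl

theorem contDiff_foldr_pd {g : En n → F} (hg : ContDiff ℝ ∞ g) (l : List (Fin n)) :
    ContDiff ℝ ∞ (l.foldr pd g) := by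
  induction l with
  | nil => exact hg
  | cons i l ih => exact contDiff_pd ih i

theorem foldr_pd_perm {g : En n → F} (hg : ContDiff ℝ ∞ g) {l l' : List (Fin n)}
    (hp : l.Perm l') : l.foldr pd g = l'.foldr pd g := by
  induction hp with
  | nil => rfl
  | cons i _ ih => rw [List.foldr_cons, List.foldr_cons, ih]
  | swap i j l => exact pd_comm ((contDiff_foldr_pd hg l).of_le (WithTop.coe_le_coe.2 le_top)) j i
  | trans _ _ ih₁ ih₂ => rw [ih₁, ih₂]

theorem mpd_add_single {g : En n → F} (hg : ContDiff ℝ ∞ g) (α : Fin n → ℕ) (j : Fin n) :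
    mpd (α + Pi.single j 1) g = mpd α (pd j g) := by
  have hp : (dirList (α + Pi.single j 1)).Perm (dirList α ++ [j]) := by
    rw [List.perm_iff_count]
    intro i
    rcases eq_or_ne i j with rfl | h
    · simp [count_dirList]
    · simp [count_dirList, h, h.symm]
  rw [mpd_eq_foldr, mpd_eq_foldr, foldr_pd_perm hg hp, List.foldr_append]
  rfl

theorem mpd_add {f g : En n → F} (hf : ContDiff ℝ ∞ f) (hg : ContDiff ℝ ∞ g)
    (α : Fin n → ℕ) : mpd α (f + g) = mpd α f + mpd α g := by
  simp only [mpd_eq_foldr]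
  induction dirList α with
  | nil => rfl
  | cons i l ih =>
    rw [List.foldr_cons, ih, pd_add ((contDiff_foldr_pd hf l).differentiable (by simp))
      ((contDiff_foldr_pd hg l).differentiable (by simp))]
    rfl

theorem mpd_clm_comp (L : F →L[ℝ] G) {g : En n → F} (hg : ContDiff ℝ ∞ g)
    (α : Fin n → ℕ) : mpd α (fun x => L (g x)) = fun x => L (mpd α g x) := by
  simp only [mpd_eq_foldr]
  induction dirList α with
  | nil => rfl
  | cons i l ih =>
    rw [List.foldr_cons, ih, pd_clm_comp L ((contDiff_foldr_pd hg l).differentiable (by simp))]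
    rfl

theorem clm_apply_eq_re_add_im (L : ℂ →L[ℝ] ℂ) (w : ℂ) :
    L w = L 1 * w.re + L Complex.I * w.im := by
  have hw : w.re • (1 : ℂ) + w.im • Complex.I = w := by simp [Complex.real_smul]
  calc L w = L (w.re • (1 : ℂ) + w.im • Complex.I) := by rw [hw]
    _ = L 1 * w.re + L Complex.I * w.im := by
      rw [map_add, map_smul, map_smul, Complex.real_smul, Complex.real_smul, mul_comm,
        mul_comm (w.im : ℂ)]

theorem pd_comp_eq_re_add_im {f : ℂ → ℂ} {g : En n → ℂ} (hf : Differentiable ℝ f)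
    (hg : Differentiable ℝ g) (i : Fin n) :
    pd i (fun x => f (g x)) =
      (fun x => fderiv ℝ f (g x) 1) * pd i (fun x => ((g x).re : ℂ)) +
        (fun x => fderiv ℝ f (g x) Complex.I) * pd i (fun x => ((g x).im : ℂ)) := by
  funext x
  have hre : pd i (fun x => ((g x).re : ℂ)) x = (pd i g x).re := by
    simpa using congrFun (pd_clm_comp (Complex.ofRealCLM.comp Complex.reCLM) hg i) x
  have him : pd i (fun x => ((g x).im : ℂ)) x = (pd i g x).im := by
    simpa using congrFun (pd_clm_comp (Complex.ofRealCLM.comp Complex.imCLM) hg i) x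
  rw [Pi.add_apply, Pi.mul_apply, Pi.mul_apply, hre, him, pd_comp (hf _) (hg x),
    clm_apply_eq_re_add_im]

end OneVariable

noncomputable section TwoVariables

variable {n : ℕ}

def pdx (i : Fin n) (h : En n → En n → ℂ) : En n → En n → ℂ :=
  fun x ξ => pd i (fun y => h y ξ) x

def pdξ (j : Fin n) (h : En n → En n → ℂ) : En n → En n → ℂ :=
  fun x ξ => pd j (h x) ξ

def mpdξ (β : Fin n → ℕ) (h : En n → En n → ℂ) : En n → En n → ℂ :=
  fun x ξ => mpd β (h x) ξ

theorem ContDiff.of_uncurry_left {E₁ E₂ F : Type*} [NormedAddCommGroup E₁] [NormedSpace ℝ E₁]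
    [NormedAddCommGroup E₂] [NormedSpace ℝ E₂] [NormedAddCommGroup F] [NormedSpace ℝ F]
    {k : WithTop ℕ∞} {h : E₁ → E₂ → F} (hh : ContDiff ℝ k (uncurry h)) (ξ : E₂) :
    ContDiff ℝ k fun y => h y ξ :=
  hh.comp (contDiff_id.prodMk contDiff_const)

theorem ContDiff.of_uncurry_right {E₁ E₂ F : Type*} [NormedAddCommGroup E₁] [NormedSpace ℝ E₁]
    [NormedAddCommGroup E₂] [NormedSpace ℝ E₂] [NormedAddCommGroup F] [NormedSpace ℝ F]
    {k : WithTop ℕ∞} {h : E₁ → E₂ → F} (hh : ContDiff ℝ k (uncurry h)) (x : E₁) :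
    ContDiff ℝ k (h x) :=
  hh.comp (contDiff_const.prodMk contDiff_id)

variable {g h : En n → En n → ℂ}

theorem pdx_eq_fderiv_uncurry {x ξ : En n} (hh : DifferentiableAt ℝ (uncurry h) (x, ξ))
    (i : Fin n) : pdx i h x ξ = fderiv ℝ (uncurry h) (x, ξ) (EuclideanSpace.single i 1, 0) := by
  change fderiv ℝ (uncurry h ∘ fun y => (y, ξ)) x _ = _
  rw [(hh.hasFDerivAt.comp x (hasFDerivAt_prodMk_left x ξ)).fderiv]
  rfl

theorem pdξ_eq_fderiv_uncurry {x ξ : En n} (hh : DifferentiableAt ℝ (uncurry h) (x, ξ))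
    (j : Fin n) : pdξ j h x ξ = fderiv ℝ (uncurry h) (x, ξ) (0, EuclideanSpace.single j 1) := by
  change fderiv ℝ (uncurry h ∘ fun η => (x, η)) ξ _ = _
  rw [(hh.hasFDerivAt.comp ξ (hasFDerivAt_prodMk_right x ξ)).fderiv]
  rfl

theorem uncurry_pdx (hh : Differentiable ℝ (uncurry h)) (i : Fin n) :
    uncurry (pdx i h) = fun q => fderiv ℝ (uncurry h) q (EuclideanSpace.single i 1, 0) :=
  funext fun q => pdx_eq_fderiv_uncurry (hh q) i

theorem uncurry_pdξ (hh : Differentiable ℝ (uncurry h)) (j : Fin n) :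
    uncurry (pdξ j h) = fun q => fderiv ℝ (uncurry h) q (0, EuclideanSpace.single j 1) :=
  funext fun q => pdξ_eq_fderiv_uncurry (hh q) j

theorem contDiff_uncurry_pdx (hh : ContDiff ℝ ∞ (uncurry h)) (i : Fin n) :
    ContDiff ℝ ∞ (uncurry (pdx i h)) := by
  rw [uncurry_pdx (hh.differentiable (by simp))]
  exact (hh.fderiv_right le_rfl).clm_apply contDiff_const

theorem contDiff_uncurry_pdξ (hh : ContDiff ℝ ∞ (uncurry h)) (j : Fin n) :
    ContDiff ℝ ∞ (uncurry (pdξ j h)) := by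
  rw [uncurry_pdξ (hh.differentiable (by simp))]
  exact (hh.fderiv_right le_rfl).clm_apply contDiff_const

theorem pdx_pdξ_comm (hh : ContDiff ℝ ∞ (uncurry h)) (i j : Fin n) :
    pdx i (pdξ j h) = pdξ j (pdx i h) := by
  have hd : Differentiable ℝ (uncurry h) := hh.differentiable (by simp)
  funext x ξ
  rw [pdx_eq_fderiv_uncurry ((contDiff_uncurry_pdξ hh j).differentiable (by simp) _),
    pdξ_eq_fderiv_uncurry ((contDiff_uncurry_pdx hh i).differentiable (by simp) _),
    uncurry_pdx hd, uncurry_pdξ hd]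
  exact fderiv_fderiv_apply_comm (hh.of_le (WithTop.coe_le_coe.2 le_top)) _ _ _

theorem foldr_pdξ_apply (l : List (Fin n)) (h : En n → En n → ℂ) (x : En n) :
    l.foldr pdξ h x = l.foldr pd (h x) := by
  induction l with
  | nil => rfl
  | cons j l ih => rw [List.foldr_cons, List.foldr_cons, ← ih]; rfl

theorem mpdξ_eq_foldr (β : Fin n → ℕ) (h : En n → En n → ℂ) :
    mpdξ β h = (dirList β).foldr pdξ h :=
  funext fun x => by rw [foldr_pdξ_apply, ← mpd_eq_foldr]; rfl

theorem contDiff_uncurry_foldr_pdξ (hh : ContDiff ℝ ∞ (uncurry h)) (l : List (Fin n)) :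
    ContDiff ℝ ∞ (uncurry (l.foldr pdξ h)) := by
  induction l with
  | nil => exact hh
  | cons j l ih => exact contDiff_uncurry_pdξ ih j

theorem contDiff_uncurry_mpdξ (hh : ContDiff ℝ ∞ (uncurry h)) (β : Fin n → ℕ) :
    ContDiff ℝ ∞ (uncurry (mpdξ β h)) := by
  rw [mpdξ_eq_foldr]
  exact contDiff_uncurry_foldr_pdξ hh _

theorem pdx_mpdξ (hh : ContDiff ℝ ∞ (uncurry h)) (i : Fin n) (β : Fin n → ℕ) :
    pdx i (mpdξ β h) = mpdξ β (pdx i h) := by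
  rw [mpdξ_eq_foldr, mpdξ_eq_foldr]
  induction dirList β with
  | nil => rfl
  | cons j l ih =>
    rw [List.foldr_cons, List.foldr_cons, pdx_pdξ_comm (contDiff_uncurry_foldr_pdξ hh l), ih]

theorem mixpd_eq_mpd_mpdξ (α β : Fin n → ℕ) (h : En n → En n → ℂ) (x ξ : En n) :
    mixpd α β h x ξ = mpd α (fun y => mpdξ β h y ξ) x := rfl

theorem mixpd_pdξ (hh : ContDiff ℝ ∞ (uncurry h)) (α β : Fin n → ℕ) (j : Fin n) :
    mixpd α β (pdξ j h) = mixpd α (β + Pi.single j 1) h := by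
  funext x ξ
  simp only [mixpd, mpd_add_single (hh.of_uncurry_right _)]
  rfl

theorem mixpd_pdx (hh : ContDiff ℝ ∞ (uncurry h)) (α β : Fin n → ℕ) (i : Fin n) :
    mixpd α β (pdx i h) = mixpd (α + Pi.single i 1) β h := by
  funext x ξ
  rw [mixpd_eq_mpd_mpdξ, mixpd_eq_mpd_mpdξ, ← pdx_mpdξ hh,
    mpd_add_single ((contDiff_uncurry_mpdξ hh β).of_uncurry_left ξ)]
  rfl

theorem mixpd_add (hg : ContDiff ℝ ∞ (uncurry g)) (hh : ContDiff ℝ ∞ (uncurry h))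
    (α β : Fin n → ℕ) : mixpd α β (g + h) = mixpd α β g + mixpd α β h := by
  have hξ : mpdξ β (g + h) = mpdξ β g + mpdξ β h := funext fun x =>
    mpd_add (hg.of_uncurry_right x) (hh.of_uncurry_right x) β
  funext x ξ
  rw [mixpd_eq_mpd_mpdξ, hξ]
  exact congrFun (mpd_add ((contDiff_uncurry_mpdξ hg β).of_uncurry_left ξ)
    ((contDiff_uncurry_mpdξ hh β).of_uncurry_left ξ) α) x

theorem mixpd_clm_comp (L : ℂ →L[ℝ] ℂ) (hh : ContDiff ℝ ∞ (uncurry h)) (α β : Fin n → ℕ) :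
    mixpd α β (fun x ξ => L (h x ξ)) = fun x ξ => L (mixpd α β h x ξ) := by
  have hξ : mpdξ β (fun x ξ => L (h x ξ)) = fun x ξ => L (mpdξ β h x ξ) := funext fun x =>
    mpd_clm_comp L (hh.of_uncurry_right x) β
  funext x ξ
  rw [mixpd_eq_mpd_mpdξ, hξ]
  exact congrFun (mpd_clm_comp L ((contDiff_uncurry_mpdξ hh β).of_uncurry_left ξ) α) x

theorem pdx_mul (hg : ContDiff ℝ ∞ (uncurry g)) (hh : ContDiff ℝ ∞ (uncurry h)) (i : Fin n) :
    pdx i (g * h) = pdx i g * h + g * pdx i h :=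
  funext fun x => funext fun ξ =>
    congrFun (pd_mul ((hg.of_uncurry_left ξ).differentiable (by simp))
      ((hh.of_uncurry_left ξ).differentiable (by simp)) i) x

theorem pdξ_mul (hg : ContDiff ℝ ∞ (uncurry g)) (hh : ContDiff ℝ ∞ (uncurry h)) (j : Fin n) :
    pdξ j (g * h) = pdξ j g * h + g * pdξ j h :=
  funext fun x => funext fun ξ =>
    congrFun (pd_mul ((hg.of_uncurry_right x).differentiable (by simp))
      ((hh.of_uncurry_right x).differentiable (by simp)) j) ξ

theorem pdx_comp_eq_re_add_im {f : ℂ → ℂ} (hf : Differentiable ℝ f)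
    (hh : ContDiff ℝ ∞ (uncurry h)) (i : Fin n) :
    pdx i (fun x ξ => f (h x ξ)) =
      (fun x ξ => fderiv ℝ f (h x ξ) 1) * pdx i (fun x ξ => ((h x ξ).re : ℂ)) +
        (fun x ξ => fderiv ℝ f (h x ξ) Complex.I) * pdx i (fun x ξ => ((h x ξ).im : ℂ)) :=
  funext fun x => funext fun ξ => congrFun (pd_comp_eq_re_add_im hf
    ((hh.of_uncurry_left ξ).differentiable (by simp)) i) x

theorem pdξ_comp_eq_re_add_im {f : ℂ → ℂ} (hf : Differentiable ℝ f)
    (hh : ContDiff ℝ ∞ (uncurry h)) (j : Fin n) :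
    pdξ j (fun x ξ => f (h x ξ)) =
      (fun x ξ => fderiv ℝ f (h x ξ) 1) * pdξ j (fun x ξ => ((h x ξ).re : ℂ)) +
        (fun x ξ => fderiv ℝ f (h x ξ) Complex.I) * pdξ j (fun x ξ => ((h x ξ).im : ℂ)) :=
  funext fun x => funext fun ξ => congrFun (pd_comp_eq_re_add_im hf
    ((hh.of_uncurry_right x).differentiable (by simp)) j) ξ

end TwoVariables

section MultiIndex

variable {n : ℕ}

theorem exists_eq_add_single {α : Fin n → ℕ} (hα : α ≠ 0) :
    ∃ (i : Fin n) (α' : Fin n → ℕ), α = α' + Pi.single i 1 := by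
  obtain ⟨i, hi⟩ := Function.ne_iff.1 hα
  refine ⟨i, α - Pi.single i 1, funext fun k => ?_⟩
  rcases eq_or_ne k i with rfl | hk
  · simp only [Pi.add_apply, Pi.sub_apply, Pi.single_eq_same]
    simp only [Pi.zero_apply] at hi
    omega
  · simp [hk]

theorem sum_add_single (α : Fin n → ℕ) (i : Fin n) :
    ∑ k, (α + Pi.single i 1 : Fin n → ℕ) k = ∑ k, α k + 1 := by
  simp [Finset.sum_add_distrib]

theorem sub_mul_sum_add_single (m ρ : ℝ) (α : Fin n → ℕ) (i : Fin n) :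
    m - ρ * ∑ k, ((α + Pi.single i 1 : Fin n → ℕ) k : ℝ) = m - ρ - ρ * ∑ k, (α k : ℝ) := by
  rw [← Nat.cast_sum, sum_add_single, Nat.cast_add, Nat.cast_sum, Nat.cast_one]
  ring

end MultiIndex

section SymbolEstimates

variable {n : ℕ} {Λ : En n → ℝ} {ρ m₁ m₂ : ℝ} {g h σ : En n → En n → ℂ}

def SGClassUpTo (Λ : En n → ℝ) (ρ m₁ m₂ : ℝ) (N : ℕ) (σ : En n → En n → ℂ) : Prop :=
  ContDiff ℝ ∞ (uncurry σ) ∧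
  ∀ α β : Fin n → ℕ, ∑ i, α i + ∑ i, β i ≤ N → ∃ C > 0, ∀ x ξ : En n,
    ‖mixpd α β σ x ξ‖ ≤
      C * Λ x ^ (m₂ - ρ * ∑ i, (α i : ℝ)) * Λ ξ ^ (m₁ - ρ * ∑ i, (β i : ℝ))

theorem sgClass_iff_forall_sgClassUpTo :
    SGClass Λ ρ m₁ m₂ σ ↔ ∀ N, SGClassUpTo Λ ρ m₁ m₂ N σ :=
  ⟨fun hσ _ => ⟨hσ.1, fun α β _ => hσ.2 α β⟩,
    fun hσ => ⟨(hσ 0).1, fun α β => (hσ _).2 α β le_rfl⟩⟩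

theorem SGClassUpTo.mono {M N : ℕ} (hσ : SGClassUpTo Λ ρ m₁ m₂ N σ) (hMN : M ≤ N) :
    SGClassUpTo Λ ρ m₁ m₂ M σ :=
  ⟨hσ.1, fun α β hαβ => hσ.2 α β (hαβ.trans hMN)⟩

theorem mixpd_zero_zero (σ : En n → En n → ℂ) : mixpd 0 0 σ = σ := by
  have hdir : dirList (0 : Fin n → ℕ) = [] := List.flatMap_eq_nil_iff.2 fun _ _ => rfl
  have hmpd : ∀ g : En n → ℂ, mpd 0 g = g := fun g => by rw [mpd_eq_foldr, hdir]; rfl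
  funext x ξ
  simp [mixpd, hmpd]

theorem sgClassUpTo_zero_iff :
    SGClassUpTo Λ ρ m₁ m₂ 0 σ ↔
      ContDiff ℝ ∞ (uncurry σ) ∧ ∃ C > 0, ∀ x ξ, ‖σ x ξ‖ ≤ C * Λ x ^ m₂ * Λ ξ ^ m₁ := by
  refine ⟨fun hσ => ⟨hσ.1, by simpa [mixpd_zero_zero] using hσ.2 0 0 (by simp)⟩,
    fun ⟨hσs, C, hC, hb⟩ => ⟨hσs, fun α β hαβ => ?_⟩⟩
  have hα : α = 0 := funext fun i => Finset.sum_eq_zero_iff.1 (by omega) i (Finset.mem_univ i)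
  have hβ : β = 0 := funext fun i => Finset.sum_eq_zero_iff.1 (by omega) i (Finset.mem_univ i)
  subst hα hβ
  simpa [mixpd_zero_zero] using ⟨C, hC, hb⟩

theorem sgClassUpTo_succ_iff {N : ℕ} :
    SGClassUpTo Λ ρ m₁ m₂ (N + 1) σ ↔
      SGClassUpTo Λ ρ m₁ m₂ 0 σ ∧ (∀ i, SGClassUpTo Λ ρ m₁ (m₂ - ρ) N (pdx i σ)) ∧
        ∀ j, SGClassUpTo Λ ρ (m₁ - ρ) m₂ N (pdξ j σ) := by
  constructor
  · intro hσ
    refine ⟨hσ.mono (Nat.zero_le _), fun i => ⟨contDiff_uncurry_pdx hσ.1 i, fun α β hαβ => ?_⟩,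
      fun j => ⟨contDiff_uncurry_pdξ hσ.1 j, fun α β hαβ => ?_⟩⟩
    · obtain ⟨C, hC, hb⟩ := hσ.2 (α + Pi.single i 1) β (by rw [sum_add_single]; omega)
      refine ⟨C, hC, fun x ξ => ?_⟩
      rw [mixpd_pdx hσ.1, ← sub_mul_sum_add_single]
      exact hb x ξ
    · obtain ⟨C, hC, hb⟩ := hσ.2 α (β + Pi.single j 1) (by rw [sum_add_single]; omega)
      refine ⟨C, hC, fun x ξ => ?_⟩
      rw [mixpd_pdξ hσ.1, ← sub_mul_sum_add_single]
      exact hb x ξ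
  · rintro ⟨hσ₀, hσx, hσξ⟩
    refine ⟨hσ₀.1, fun α β hαβ => ?_⟩
    rcases eq_or_ne α 0 with rfl | hα
    · rcases eq_or_ne β 0 with rfl | hβ
      · exact hσ₀.2 0 0 (by simp)
      obtain ⟨j, β, rfl⟩ := exists_eq_add_single hβ
      obtain ⟨C, hC, hb⟩ := (hσξ j).2 0 β (by rw [sum_add_single] at hαβ; omega)
      refine ⟨C, hC, fun x ξ => ?_⟩
      rw [← mixpd_pdξ hσ₀.1, sub_mul_sum_add_single]
      exact hb x ξ
    · obtain ⟨i, α, rfl⟩ := exists_eq_add_single hα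
      obtain ⟨C, hC, hb⟩ := (hσx i).2 α β (by rw [sum_add_single] at hαβ; omega)
      refine ⟨C, hC, fun x ξ => ?_⟩
      rw [← mixpd_pdx hσ₀.1, sub_mul_sum_add_single]
      exact hb x ξ

theorem SGClassUpTo.add {N : ℕ} (hg : SGClassUpTo Λ ρ m₁ m₂ N g)
    (hh : SGClassUpTo Λ ρ m₁ m₂ N h) : SGClassUpTo Λ ρ m₁ m₂ N (g + h) := by
  refine ⟨hg.1.add hh.1, fun α β hαβ => ?_⟩
  obtain ⟨C, hC, hgb⟩ := hg.2 α β hαβ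
  obtain ⟨C', hC', hhb⟩ := hh.2 α β hαβ
  refine ⟨C + C', add_pos hC hC', fun x ξ => ?_⟩
  rw [mixpd_add hg.1 hh.1, Pi.add_apply, Pi.add_apply]
  calc _ ≤ ‖mixpd α β g x ξ‖ + ‖mixpd α β h x ξ‖ := norm_add_le _ _
    _ ≤ _ := add_le_add (hgb x ξ) (hhb x ξ)
    _ = _ := by ring

theorem SGClassUpTo.clm_comp (L : ℂ →L[ℝ] ℂ) {N : ℕ} (hσ : SGClassUpTo Λ ρ m₁ m₂ N σ) :
    SGClassUpTo Λ ρ m₁ m₂ N fun x ξ => L (σ x ξ) := by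
  refine ⟨L.contDiff.comp hσ.1, fun α β hαβ => ?_⟩
  obtain ⟨C, hC, hb⟩ := hσ.2 α β hαβ
  refine ⟨(‖L‖ + 1) * C, by positivity, fun x ξ => ?_⟩
  rw [mixpd_clm_comp L hσ.1]
  calc _ ≤ ‖L‖ * ‖mixpd α β σ x ξ‖ := L.le_opNorm _
    _ ≤ (‖L‖ + 1) * ‖mixpd α β σ x ξ‖ := by gcongr; linarith
    _ ≤ _ := by rw [mul_assoc, mul_assoc]; gcongr; simpa [mul_assoc] using hb x ξ

theorem SGClassUpTo.mul (hΛ : ∀ x, 0 < Λ x) {m₁' m₂' : ℝ} {N : ℕ}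
    (hg : SGClassUpTo Λ ρ m₁ m₂ N g) (hh : SGClassUpTo Λ ρ m₁' m₂' N h) :
    SGClassUpTo Λ ρ (m₁ + m₁') (m₂ + m₂') N (g * h) := by
  induction N generalizing m₁ m₂ m₁' m₂' g h with
  | zero =>
    obtain ⟨hgs, C, hC, hgb⟩ := sgClassUpTo_zero_iff.1 hg
    obtain ⟨hhs, C', hC', hhb⟩ := sgClassUpTo_zero_iff.1 hh
    refine sgClassUpTo_zero_iff.2 ⟨hgs.mul hhs, C * C', mul_pos hC hC', fun x ξ => ?_⟩
    calc ‖g x ξ * h x ξ‖ = ‖g x ξ‖ * ‖h x ξ‖ := norm_mul _ _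
      _ ≤ (C * Λ x ^ m₂ * Λ ξ ^ m₁) * (C' * Λ x ^ m₂' * Λ ξ ^ m₁') :=
        mul_le_mul (hgb x ξ) (hhb x ξ) (norm_nonneg _) ((norm_nonneg _).trans (hgb x ξ))
      _ = _ := by rw [rpow_add (hΛ x), rpow_add (hΛ ξ)]; ring
  | succ N ih =>
    obtain ⟨-, hgx, hgξ⟩ := sgClassUpTo_succ_iff.1 hg
    obtain ⟨-, hhx, hhξ⟩ := sgClassUpTo_succ_iff.1 hh
    have hg' := hg.mono N.le_succ
    have hh' := hh.mono N.le_succ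
    refine sgClassUpTo_succ_iff.2 ⟨(ih hg' hh').mono (Nat.zero_le _), fun i => ?_, fun j => ?_⟩
    · have h₁ := ih (hgx i) hh'
      have h₂ := ih hg' (hhx i)
      rw [pdx_mul hg.1 hh.1]
      rw [show m₂ - ρ + m₂' = m₂ + m₂' - ρ by ring] at h₁
      rw [show m₂ + (m₂' - ρ) = m₂ + m₂' - ρ by ring] at h₂
      exact h₁.add h₂
    · have h₁ := ih (hgξ j) hh'
      have h₂ := ih hg' (hhξ j)
      rw [pdξ_mul hg.1 hh.1]
      rw [show m₁ - ρ + m₁' = m₁ + m₁' - ρ by ring] at h₁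
      rw [show m₁ + (m₁' - ρ) = m₁ + m₁' - ρ by ring] at h₂
      exact h₁.add h₂

end SymbolEstimates

section Composition

variable {n : ℕ} {Λ : En n → ℝ} {ρ : ℝ} {σ : En n → En n → ℂ}

theorem SGClass.exists_bound_comp (hσ : SGClass Λ ρ 0 0 σ) {F : ℂ → ℂ} (hF : Continuous F) :
    ∃ C > 0, ∀ x ξ, ‖F (σ x ξ)‖ ≤ C := by
  obtain ⟨R, -, hR⟩ := hσ.2 0 0
  obtain ⟨M, hM⟩ :=
    (isCompact_closedBall (0 : ℂ) R).exists_bound_of_continuousOn hF.continuousOn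
  refine ⟨max M 1, by positivity, fun x ξ => (hM _ ?_).trans (le_max_left _ _)⟩
  simpa [mixpd_zero_zero] using hR x ξ

theorem SGClassUpTo.comp (hΛ : ∀ x, 0 < Λ x) (hσ : SGClass Λ ρ 0 0 σ) (N : ℕ) {F : ℂ → ℂ}
    (hF : ContDiff ℝ ∞ F) : SGClassUpTo Λ ρ 0 0 N fun x ξ => F (σ x ξ) := by
  induction N generalizing F with
  | zero =>
    obtain ⟨C, hC, hb⟩ := hσ.exists_bound_comp hF.continuous
    exact sgClassUpTo_zero_iff.2 ⟨hF.comp hσ.1, C, hC, by simpa using hb⟩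
  | succ N ih =>
    have hσN := sgClass_iff_forall_sgClassUpTo.1 hσ (N + 1)
    have hre : SGClassUpTo Λ ρ 0 0 (N + 1) fun x ξ => ((σ x ξ).re : ℂ) := by
      simpa using hσN.clm_comp (Complex.ofRealCLM.comp Complex.reCLM)
    have him : SGClassUpTo Λ ρ 0 0 (N + 1) fun x ξ => ((σ x ξ).im : ℂ) := by
      simpa using hσN.clm_comp (Complex.ofRealCLM.comp Complex.imCLM)
    obtain ⟨-, hrex, hreξ⟩ := sgClassUpTo_succ_iff.1 hre
    obtain ⟨-, himx, himξ⟩ := sgClassUpTo_succ_iff.1 him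
    have hdF : ∀ w, ContDiff ℝ ∞ fun z => fderiv ℝ F z w := fun w =>
      (hF.fderiv_right le_rfl).clm_apply contDiff_const
    have hF' : Differentiable ℝ F := hF.differentiable (by simp)
    refine sgClassUpTo_succ_iff.2 ⟨(ih hF).mono (Nat.zero_le _), fun i => ?_, fun j => ?_⟩
    · rw [pdx_comp_eq_re_add_im hF' hσ.1]
      simpa using ((ih (hdF 1)).mul hΛ (hrex i)).add ((ih (hdF Complex.I)).mul hΛ (himx i))
    · rw [pdξ_comp_eq_re_add_im hF' hσ.1]
      simpa using ((ih (hdF 1)).mul hΛ (hreξ j)).add ((ih (hdF Complex.I)).mul hΛ (himξ j))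

end Composition

theorem comp_SGClass_zero_general (n : ℕ) (Λ : En n → ℝ) (μ₀ μ₁ μ ρ : ℝ)
    (hw : IsWeight n Λ μ₀ μ₁ μ)
    (σ : En n → En n → ℂ) (hσ : SGClass Λ ρ 0 0 σ)
    (F : ℂ → ℂ) (hF : ContDiff ℝ (⊤ : ℕ∞) F) :
    SGClass Λ ρ 0 0 (fun x ξ => F (σ x ξ)) :=
  sgClass_iff_forall_sgClassUpTo.2 fun N => SGClassUpTo.comp hw.pos hσ N hF

/-- if `σ ∈ S^{0,0}_{ρ,Λ}` and `F : ℂ → ℂ` is smooth, then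
`F ∘ σ ∈ S^{0,0}_{ρ,Λ}`. -/
theorem comp_SGClass_zero (n : ℕ) (hn : 1 ≤ n) (Λ : En n → ℝ) (μ₀ μ₁ μ ρ : ℝ)
    (hw : IsWeight n Λ μ₀ μ₁ μ) (hρ : 0 < ρ) (hρμ : ρ ≤ 1 / μ)
    (σ : En n → En n → ℂ) (hσ : SGClass Λ ρ 0 0 σ)
    (F : ℂ → ℂ) (hF : ContDiff ℝ (⊤ : ℕ∞) F) :
    SGClass Λ ρ 0 0 (fun x ξ => F (σ x ξ)) :=
  comp_SGClass_zero_general n Λ μ₀ μ₁ μ ρ hw σ hσ F hF
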